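/- arXiv:2002.05991 — 2 statements merged into one kernel-verified Lean document; each statement's English description precedes it below -/
import Mathlib

section
/- Fix ξ ∈ ℂⁿ and f = (f₁,…,f_N) ∈ ℂ[x]^N. Let Λ₁,…,Λ_r ∈ ℂ[d_ξ] be of degree ≤ t−1 such that D = span(Λ₁,…,Λ_r) is stable under derivation and every Λ_j, as a functional, vanishes on f₁,…,f_N. Suppose scalars ν_j^k ∈ ℂ (j = 1,…,r, k = 1,…,n) satisfy the commutation relations Σ_{j=1}^r ( ν_j^k ∂_{d_l}(Λ_j) − ν_j^l ∂_{d_k}(Λ_j) ) = 0 for all 1 ≤ k < l ≤ n, and the functional Δ = Σ_{j=1}^r Σ_{k=1}^n ν_j^k ∫ᵏΛ_j satisfies Δ(f_l) = 0 for l = 1,…,N. Then Δ is a polynomial of degree ≤ t which, as a functional, vanishes on the ideal (f₁,…,f_N), i.e., Δ ∈ (f)^⊥ ∩ ℂ[d_ξ]_t, and D + ℂΔ is stable under derivation. -/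
open MvPolynomial

/-- Total degree `|β|` of an exponent vector `β ∈ ℕⁿ`. -/
def mdeg {n : ℕ} (a : Fin n →₀ ℕ) : ℕ := ∑ i, a i

/-- Iterated partial derivative `∂^β p`. -/
noncomputable def pdiff {n : ℕ} (β : Fin n →₀ ℕ) (p : MvPolynomial (Fin n) ℂ) :
    MvPolynomial (Fin n) ℂ :=
  (List.finRange n).foldr (fun i q => (fun r => pderiv i r)^[β i] q) p

/-- The linear functional on `ℂ[x]` attached to the dual polynomial `Λ ∈ ℂ[d_ξ]`:
`Λ(p) = Σ_β coeff_β(Λ) • (∂^β p)(ξ)`. -/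
noncomputable def dapply {n : ℕ} (ξ : Fin n → ℂ) (Λ p : MvPolynomial (Fin n) ℂ) : ℂ :=
  ∑ β ∈ Λ.support, coeff β Λ * eval ξ (pdiff β p)

/-- The shifted monomial `(x-ξ)^β`. -/
noncomputable def xpow {n : ℕ} (ξ : Fin n → ℂ) (β : Fin n →₀ ℕ) : MvPolynomial (Fin n) ℂ :=
  ∏ i, (X i - C (ξ i)) ^ β i

/-- `∫ᵏΛ`: substitute `0` for `d_{k+1},…,d_n` in `Λ` and take the antiderivative with
respect to `d_k` having no constant term. -/
noncomputable def integ {n : ℕ} (k : Fin n) (Λ : MvPolynomial (Fin n) ℂ) :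
    MvPolynomial (Fin n) ℂ :=
  let Λ' := aeval (fun i => if i ≤ k then X i else 0) Λ
  ∑ β ∈ Λ'.support, monomial (β + Finsupp.single k 1) (coeff β Λ' / ((β k : ℂ) + 1))

/-- The maximal ideal `m_ξ` of polynomials vanishing at `ξ`. -/
noncomputable def mIdeal {n : ℕ} (ξ : Fin n → ℂ) : Ideal (MvPolynomial (Fin n) ℂ) :=
  RingHom.ker (eval ξ)

/-- `β! = β₁!⋯βₙ!`. -/
def ffact {n : ℕ} (a : Fin n →₀ ℕ) : ℕ := ∏ i, (a i).factorial


/-!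
Differentiating term by term, `∂/∂dₖ ∫ˡΛ` vanishes for `l < k`, is the truncation
`Λ(d₁,…,dₖ,0,…,0)` for `l = k`, and equals `∫ˡ ∂Λ/∂dₖ` for `l > k`. The commutation relations
turn `Σⱼ νⱼˡ ∂Λⱼ/∂dₖ` into `Σⱼ νⱼᵏ ∂Λⱼ/∂dₗ`, and `∫ˡ ∂/∂dₗ` is the difference of two consecutive
truncations, so everything telescopes to `∂Δ/∂dₖ = Σⱼ νⱼᵏ Λⱼ ∈ D`; hence `D + ℂΔ` is stable under
derivation. The polynomials annihilated by a derivation-stable space of functionals form an ideal,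
because `Λ(xᵢ p) = ξᵢ Λ(p) + (∂Λ/∂dᵢ)(p)`; since `D + ℂΔ` vanishes on the generators `f_l`, it
vanishes on `(f)`. Integration raises the degree by at most one, so `deg Δ ≤ t`.
-/

section IteratedPDeriv

variable {σ R : Type*} [CommSemiring R]

theorem pderiv_pow_X_mul_of_ne {i j : σ} (h : i ≠ j) (m : ℕ) (p : MvPolynomial σ R) :
    ((pderiv j).toLinearMap ^ m) (X i * p) = X i * ((pderiv j).toLinearMap ^ m) p := by
  induction m with
  | zero => rfl
  | succ m ih => simp [pow_succ', ih, pderiv_X_of_ne h]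

theorem pderiv_pow_X_mul_self (i : σ) (m : ℕ) (p : MvPolynomial σ R) :
    ((pderiv i).toLinearMap ^ m) (X i * p)
      = X i * ((pderiv i).toLinearMap ^ m) p + m • ((pderiv i).toLinearMap ^ (m - 1)) p := by
  induction m with
  | zero => simp
  | succ m ih =>
    rw [pow_succ', Module.End.mul_apply, ih, map_add, map_nsmul]
    cases m with
    | zero => simp
    | succ m =>
      simp only [Nat.add_sub_cancel, Derivation.coeFn_coe, pderiv_mul, pderiv_X_self, one_mul,
        Module.End.mul_apply, pow_succ' _ m]
      module

noncomputable def iteratedPDeriv (β : σ →₀ ℕ) (l : List σ) : Module.End R (MvPolynomial σ R) :=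
  l.foldr (fun i D => (pderiv i).toLinearMap ^ β i * D) 1

theorem iteratedPDeriv_cons (β : σ →₀ ℕ) (a : σ) (l : List σ) :
    (iteratedPDeriv β (a :: l) : Module.End R (MvPolynomial σ R))
      = (pderiv a).toLinearMap ^ β a * iteratedPDeriv β l := rfl

theorem iteratedPDeriv_congr {β γ : σ →₀ ℕ} {l : List σ} (h : ∀ i ∈ l, β i = γ i) :
    (iteratedPDeriv β l : Module.End R (MvPolynomial σ R)) = iteratedPDeriv γ l := by
  induction l with
  | nil => rfl
  | cons a l ih =>
    rw [List.forall_mem_cons] at h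
    rw [iteratedPDeriv_cons, iteratedPDeriv_cons, h.1, ih h.2]

theorem iteratedPDeriv_X_mul_of_notMem (β : σ →₀ ℕ) {i : σ} {l : List σ} (h : i ∉ l)
    (p : MvPolynomial σ R) :
    iteratedPDeriv β l (X i * p) = X i * iteratedPDeriv β l p := by
  induction l with
  | nil => rfl
  | cons a l ih =>
    rw [List.mem_cons, not_or] at h
    rw [iteratedPDeriv_cons, Module.End.mul_apply, Module.End.mul_apply, ih h.2,
      pderiv_pow_X_mul_of_ne h.1]

theorem iteratedPDeriv_X_mul_of_mem [DecidableEq σ] (β : σ →₀ ℕ) {i : σ} {l : List σ}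
    (hl : l.Nodup) (h : i ∈ l) (p : MvPolynomial σ R) :
    iteratedPDeriv β l (X i * p)
      = X i * iteratedPDeriv β l p + β i • iteratedPDeriv (β - Finsupp.single i 1) l p := by
  induction l with
  | nil => simp at h
  | cons a l ih =>
    rw [List.nodup_cons] at hl
    simp only [iteratedPDeriv_cons, Module.End.mul_apply]
    rcases eq_or_ne i a with rfl | hia
    · have hl' : ∀ j ∈ l, (β - Finsupp.single i 1 : σ →₀ ℕ) j = β j := fun j hj => by
        simp [ne_of_mem_of_not_mem hj hl.1]
      rw [iteratedPDeriv_X_mul_of_notMem β hl.1, pderiv_pow_X_mul_self,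
        iteratedPDeriv_congr hl']
      simp
    · rw [ih hl.2 (List.mem_of_ne_of_mem hia h), map_add, map_nsmul, pderiv_pow_X_mul_of_ne hia]
      simp [hia.symm]

end IteratedPDeriv

section SumSupport

variable {σ R M : Type*} [CommSemiring R] [AddCommMonoid M] {g : (σ →₀ ℕ) → R → M}

theorem sum_support_coeff_add (h₀ : ∀ β, g β 0 = 0)
    (hadd : ∀ β a b, g β (a + b) = g β a + g β b) (p q : MvPolynomial σ R) :
    ∑ β ∈ (p + q).support, g β (coeff β (p + q))
      = ∑ β ∈ p.support, g β (coeff β p) + ∑ β ∈ q.support, g β (coeff β q) := by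
  simp only [← sum_def (b := g), AddMonoidAlgebra.coeff_add]
  exact Finsupp.sum_add_index' h₀ hadd

theorem sum_support_coeff_smul [Module R M] (h₀ : ∀ β, g β 0 = 0)
    (hsmul : ∀ β a b, g β (a * b) = a • g β b) (a : R) (p : MvPolynomial σ R) :
    ∑ β ∈ (a • p).support, g β (coeff β (a • p)) = a • ∑ β ∈ p.support, g β (coeff β p) := by
  simp only [← sum_def (b := g), AddMonoidAlgebra.coeff_smul]
  rw [Finsupp.sum_smul_index' h₀, Finsupp.smul_sum]
  exact Finsupp.sum_congr fun β _ => hsmul β a _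

end SumSupport

section Dapply

variable {n : ℕ}

theorem pdiff_eq_iteratedPDeriv (β : Fin n →₀ ℕ) (p : MvPolynomial (Fin n) ℂ) :
    pdiff β p = iteratedPDeriv β (List.finRange n) p := by
  unfold pdiff
  induction List.finRange n with
  | nil => rfl
  | cons a l ih =>
    rw [List.foldr_cons, ih, iteratedPDeriv_cons, Module.End.mul_apply, Module.End.pow_apply]
    rfl

theorem pdiff_X_mul (β : Fin n →₀ ℕ) (i : Fin n) (p : MvPolynomial (Fin n) ℂ) :
    pdiff β (X i * p) = X i * pdiff β p + β i • pdiff (β - Finsupp.single i 1) p := by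
  simp only [pdiff_eq_iteratedPDeriv]
  exact iteratedPDeriv_X_mul_of_mem β (List.nodup_finRange n) (List.mem_finRange i) p

variable (ξ : Fin n → ℂ)

theorem dapply_add_left (Λ₁ Λ₂ p : MvPolynomial (Fin n) ℂ) :
    dapply ξ (Λ₁ + Λ₂) p = dapply ξ Λ₁ p + dapply ξ Λ₂ p :=
  sum_support_coeff_add (g := fun β c => c * eval ξ (pdiff β p)) (fun _ => zero_mul _)
    (fun _ _ _ => add_mul _ _ _) Λ₁ Λ₂

theorem dapply_smul_left (a : ℂ) (Λ p : MvPolynomial (Fin n) ℂ) :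
    dapply ξ (a • Λ) p = a * dapply ξ Λ p :=
  sum_support_coeff_smul (g := fun β c => c * eval ξ (pdiff β p)) (fun _ => zero_mul _)
    (fun _ _ _ => mul_assoc _ _ _) a Λ

theorem dapply_add_right (Λ p q : MvPolynomial (Fin n) ℂ) :
    dapply ξ Λ (p + q) = dapply ξ Λ p + dapply ξ Λ q := by
  simp only [dapply, pdiff_eq_iteratedPDeriv, map_add, mul_add, Finset.sum_add_distrib]

theorem dapply_smul_right (a : ℂ) (Λ p : MvPolynomial (Fin n) ℂ) :
    dapply ξ Λ (a • p) = a * dapply ξ Λ p := by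
  simp only [dapply, pdiff_eq_iteratedPDeriv, map_smul, smul_eval, Finset.mul_sum, mul_left_comm]

theorem dapply_monomial (β : Fin n →₀ ℕ) (c : ℂ) (p : MvPolynomial (Fin n) ℂ) :
    dapply ξ (monomial β c) p = c * eval ξ (pdiff β p) := by
  classical
  rcases eq_or_ne c 0 with rfl | hc
  · simp [dapply]
  · rw [dapply, support_monomial, if_neg hc, Finset.sum_singleton, coeff_monomial, if_pos rfl]

theorem dapply_X_mul (Λ p : MvPolynomial (Fin n) ℂ) (i : Fin n) :
    dapply ξ Λ (X i * p) = ξ i * dapply ξ Λ p + dapply ξ (pderiv i Λ) p := by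
  induction Λ using MvPolynomial.induction_on' with
  | monomial β c =>
    rw [dapply_monomial, pdiff_X_mul, pderiv_monomial, dapply_monomial, dapply_monomial]
    simp only [map_add, map_mul, eval_X, nsmul_eq_mul, map_natCast]
    ring
  | add Λ₁ Λ₂ h₁ h₂ =>
    rw [dapply_add_left, map_add, dapply_add_left, dapply_add_left, h₁, h₂]
    ring

end Dapply

section Annihilator

variable {n : ℕ} (ξ : Fin n → ℂ)

theorem dapply_eq_zero_of_mem_span {S : Set (MvPolynomial (Fin n) ℂ)} {p : MvPolynomial (Fin n) ℂ}
    (h : ∀ Λ ∈ S, dapply ξ Λ p = 0) {Λ : MvPolynomial (Fin n) ℂ}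
    (hΛ : Λ ∈ Submodule.span ℂ S) : dapply ξ Λ p = 0 := by
  induction hΛ using Submodule.span_induction with
  | mem Λ hΛ => exact h Λ hΛ
  | zero => simp [dapply]
  | add Λ₁ Λ₂ _ _ h₁ h₂ => rw [dapply_add_left, h₁, h₂, add_zero]
  | smul a Λ _ hΛ => rw [dapply_smul_left, hΛ, mul_zero]

variable {ξ} in
theorem dapply_mul_eq_zero {E : Submodule ℂ (MvPolynomial (Fin n) ℂ)}
    (hE : ∀ Λ ∈ E, ∀ k, pderiv k Λ ∈ E) (g : MvPolynomial (Fin n) ℂ)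
    {q : MvPolynomial (Fin n) ℂ} (hq : ∀ Λ ∈ E, dapply ξ Λ q = 0) :
    ∀ Λ ∈ E, dapply ξ Λ (g * q) = 0 := by
  induction g using MvPolynomial.induction_on generalizing q with
  | C a => intro Λ hΛ; rw [← smul_eq_C_mul, dapply_smul_right, hq Λ hΛ, mul_zero]
  | add g₁ g₂ h₁ h₂ =>
    intro Λ hΛ; rw [add_mul, dapply_add_right, h₁ hq Λ hΛ, h₂ hq Λ hΛ, add_zero]
  | mul_X g i ih =>
    rw [mul_assoc]
    refine ih fun Λ hΛ => ?_
    rw [dapply_X_mul, hq Λ hΛ, hq _ (hE Λ hΛ i), mul_zero, add_zero]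

noncomputable def annihilatorIdeal (E : Submodule ℂ (MvPolynomial (Fin n) ℂ))
    (hE : ∀ Λ ∈ E, ∀ k, pderiv k Λ ∈ E) : Ideal (MvPolynomial (Fin n) ℂ) where
  carrier := {p | ∀ Λ ∈ E, dapply ξ Λ p = 0}
  zero_mem' Λ _ := by simpa using dapply_smul_right ξ 0 Λ 0
  add_mem' hp hq Λ hΛ := by rw [dapply_add_right, hp Λ hΛ, hq Λ hΛ, add_zero]
  smul_mem' g _ hq := dapply_mul_eq_zero hE g hq

theorem dapply_eq_zero_of_mem_ideal_span {E : Submodule ℂ (MvPolynomial (Fin n) ℂ)}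
    (hE : ∀ Λ ∈ E, ∀ k, pderiv k Λ ∈ E) {ι : Type*} {f : ι → MvPolynomial (Fin n) ℂ}
    (hf : ∀ Λ ∈ E, ∀ i, dapply ξ Λ (f i) = 0) {p : MvPolynomial (Fin n) ℂ}
    (hp : p ∈ Ideal.span (Set.range f)) : ∀ Λ ∈ E, dapply ξ Λ p = 0 :=
  (Ideal.span_le (I := annihilatorIdeal ξ E hE)).2
    (Set.range_subset_iff.2 fun i Λ hΛ => hf Λ hΛ i) hp

end Annihilator

theorem forall_sub_single_ne_zero_iff {σ : Type*} {P : σ → Prop} {k : σ} (hk : P k)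
    (β : σ →₀ ℕ) :
    (∀ i, (β - Finsupp.single k 1 : σ →₀ ℕ) i ≠ 0 → P i) ↔ ∀ i, β i ≠ 0 → P i := by
  refine ⟨fun h i hi => ?_, fun h i hi => h i fun h0 => hi (by simp [h0])⟩
  rcases eq_or_ne i k with rfl | hik
  · exact hk
  · exact h i (by simpa [Finsupp.single_apply, hik.symm] using hi)

section RestrictVars

variable {σ R : Type*} [CommSemiring R] (P : σ → Prop) [DecidablePred P]

noncomputable def restrictVars : MvPolynomial σ R →ₐ[R] MvPolynomial σ R :=
  aeval fun i => if P i then X i else 0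

open Classical in
theorem restrictVars_monomial (β : σ →₀ ℕ) (c : R) :
    restrictVars P (monomial β c) = if ∀ i, β i ≠ 0 → P i then monomial β c else 0 := by
  rw [restrictVars, aeval_monomial]
  split_ifs with h
  · rw [monomial_eq, algebraMap_eq]
    congr 1
    exact Finsupp.prod_congr fun i hi => by rw [if_pos (h i (Finsupp.mem_support_iff.1 hi))]
  · push Not at h
    obtain ⟨i, hi, hPi⟩ := h
    rw [Finsupp.prod, Finset.prod_eq_zero (Finsupp.mem_support_iff.2 hi)
      (by rw [if_neg hPi, zero_pow hi]), mul_zero]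

open Classical in
theorem coeff_restrictVars (Λ : MvPolynomial σ R) (γ : σ →₀ ℕ) :
    coeff γ (restrictVars P Λ) = if ∀ i, γ i ≠ 0 → P i then coeff γ Λ else 0 := by
  induction Λ using MvPolynomial.induction_on' with
  | monomial β c =>
    rw [restrictVars_monomial]
    by_cases hβ : β = γ
    · subst hβ; split_ifs <;> simp
    · split_ifs <;> simp [coeff_monomial, hβ]
  | add p q hp hq =>
    rw [map_add, coeff_add, coeff_add, hp, hq]
    split_ifs <;> simp

theorem totalDegree_restrictVars_le (Λ : MvPolynomial σ R) :
    (restrictVars P Λ).totalDegree ≤ Λ.totalDegree := by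
  refine totalDegree_le_of_support_subset fun γ hγ => ?_
  rw [mem_support_iff, coeff_restrictVars] at hγ
  exact mem_support_iff.2 fun h => hγ (by rw [h, ite_self])

end RestrictVars

section Telescoping

variable {σ R : Type*} [LinearOrder σ] [LocallyFiniteOrderTop σ] [CommRing R]

theorem restrictVars_le_add_sum_Ioi (k : σ) (Λ : MvPolynomial σ R) :
    restrictVars (· ≤ k) Λ
      + ∑ l ∈ Finset.Ioi k, (restrictVars (· ≤ l) Λ - restrictVars (· < l) Λ) = Λ := by
  classical
  ext γ
  simp only [coeff_add, coeff_sum, coeff_sub, coeff_restrictVars]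
  by_cases hk : ∀ i, γ i ≠ 0 → i ≤ k
  · rw [if_pos hk, Finset.sum_eq_zero fun l hl => ?_, add_zero]
    have hkl := Finset.mem_Ioi.1 hl
    rw [if_pos fun i hi => (hk i hi).trans hkl.le, if_pos fun i hi => (hk i hi).trans_lt hkl,
      sub_self]
  · rw [if_neg hk, zero_add]
    push Not at hk
    obtain ⟨i₀, hi₀, hki₀⟩ := hk
    have hS : γ.support.Nonempty := ⟨i₀, Finsupp.mem_support_iff.2 hi₀⟩
    set L := γ.support.max' hS
    have hL : γ L ≠ 0 := Finsupp.mem_support_iff.1 (γ.support.max'_mem hS)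
    have hle : ∀ i, γ i ≠ 0 → i ≤ L := fun i hi =>
      γ.support.le_max' i (Finsupp.mem_support_iff.2 hi)
    have hleL : ∀ l, (∀ i, γ i ≠ 0 → i ≤ l) ↔ L ≤ l := fun l =>
      ⟨fun h => h L hL, fun h i hi => (hle i hi).trans h⟩
    have hltL : ∀ l, (∀ i, γ i ≠ 0 → i < l) ↔ L < l := fun l =>
      ⟨fun h => h L hL, fun h i hi => (hle i hi).trans_lt h⟩
    simp only [hleL, hltL]
    rw [Finset.sum_eq_single L]
    · simp
    · intro l _ hlL
      have : L ≤ l ↔ L < l := ⟨fun h => lt_of_le_of_ne h (Ne.symm hlL), le_of_lt⟩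
      simp only [this, sub_self]
    · exact fun hL' => absurd (Finset.mem_Ioi.2 (hki₀.trans_le (hle i₀ hi₀))) hL'

end Telescoping

section Integ

variable {n : ℕ}

theorem integ_eq (k : Fin n) (Λ : MvPolynomial (Fin n) ℂ) :
    integ k Λ = ∑ β ∈ (restrictVars (· ≤ k) Λ).support,
      monomial (β + Finsupp.single k 1) (coeff β (restrictVars (· ≤ k) Λ) / ((β k : ℂ) + 1)) :=
  rfl

theorem integ_add (k : Fin n) (Λ₁ Λ₂ : MvPolynomial (Fin n) ℂ) :
    integ k (Λ₁ + Λ₂) = integ k Λ₁ + integ k Λ₂ := by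
  simp only [integ_eq, map_add]
  exact sum_support_coeff_add
    (g := fun β c => monomial (β + Finsupp.single k 1) (c / ((β k : ℂ) + 1))) (fun _ => by simp)
    (fun _ _ _ => by rw [add_div, map_add]) _ _

theorem integ_smul (k : Fin n) (a : ℂ) (Λ : MvPolynomial (Fin n) ℂ) :
    integ k (a • Λ) = a • integ k Λ := by
  simp only [integ_eq, map_smul]
  exact sum_support_coeff_smul
    (g := fun β c => monomial (β + Finsupp.single k 1) (c / ((β k : ℂ) + 1))) (fun _ => by simp)
    (fun _ _ _ => by rw [smul_monomial, smul_eq_mul, mul_div_assoc]) _ _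

noncomputable def integₗ (k : Fin n) : MvPolynomial (Fin n) ℂ →ₗ[ℂ] MvPolynomial (Fin n) ℂ where
  toFun := integ k
  map_add' := integ_add k
  map_smul' := integ_smul k

theorem integₗ_apply (k : Fin n) (Λ : MvPolynomial (Fin n) ℂ) : integₗ k Λ = integ k Λ := rfl

open Classical in
theorem integ_monomial (k : Fin n) (β : Fin n →₀ ℕ) (c : ℂ) :
    integ k (monomial β c) = if ∀ i, β i ≠ 0 → i ≤ k
      then monomial (β + Finsupp.single k 1) (c / ((β k : ℂ) + 1)) else 0 := by
  rw [integ_eq, restrictVars_monomial]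
  split_ifs with h
  · rcases eq_or_ne c 0 with rfl | hc
    · simp
    · rw [support_monomial, if_neg hc, Finset.sum_singleton, coeff_monomial, if_pos rfl]
  · simp

theorem pderiv_integ_self (k : Fin n) (Λ : MvPolynomial (Fin n) ℂ) :
    pderiv k (integ k Λ) = restrictVars (· ≤ k) Λ := by
  induction Λ using MvPolynomial.induction_on' with
  | monomial β c =>
    rw [integ_monomial, restrictVars_monomial]
    split_ifs
    · rw [pderiv_monomial, add_tsub_cancel_right]
      congr 1
      simp only [Finsupp.add_apply, Finsupp.single_eq_same, Nat.cast_add, Nat.cast_one]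
      field_simp
    · simp
  | add Λ₁ Λ₂ h₁ h₂ => rw [integ_add, map_add, h₁, h₂, map_add]

theorem pderiv_integ_of_lt {k l : Fin n} (hlk : l < k) (Λ : MvPolynomial (Fin n) ℂ) :
    pderiv k (integ l Λ) = 0 := by
  induction Λ using MvPolynomial.induction_on' with
  | monomial β c =>
    rw [integ_monomial]
    split_ifs with h
    · have hk : β k = 0 := by
        by_contra hk; exact absurd (h k hk) (not_le.2 hlk)
      simp [pderiv_monomial, hk, hlk.ne]
    · simp
  | add Λ₁ Λ₂ h₁ h₂ => rw [integ_add, map_add, h₁, h₂, add_zero]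

theorem pderiv_integ_of_gt {k l : Fin n} (hkl : k < l) (Λ : MvPolynomial (Fin n) ℂ) :
    pderiv k (integ l Λ) = integ l (pderiv k Λ) := by
  induction Λ using MvPolynomial.induction_on' with
  | monomial β c =>
    rw [integ_monomial, pderiv_monomial, integ_monomial]
    simp only [forall_sub_single_ne_zero_iff (P := (· ≤ l)) hkl.le]
    have hexp : β + Finsupp.single l 1 - Finsupp.single k 1
        = β - Finsupp.single k 1 + Finsupp.single l 1 := by
      ext i
      simp only [Finsupp.add_apply, Finsupp.tsub_apply, Finsupp.single_apply]
      split_ifs <;> omega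
    split_ifs
    · rw [pderiv_monomial, hexp]
      congr 1
      simp [hkl.ne, hkl.ne']
      ring
    · simp
  | add Λ₁ Λ₂ h₁ h₂ => rw [integ_add, map_add, h₁, h₂, map_add, integ_add]

theorem integ_pderiv_self (l : Fin n) (Λ : MvPolynomial (Fin n) ℂ) :
    integ l (pderiv l Λ) = restrictVars (· ≤ l) Λ - restrictVars (· < l) Λ := by
  induction Λ using MvPolynomial.induction_on' with
  | monomial β c =>
    rw [pderiv_monomial, integ_monomial, restrictVars_monomial, restrictVars_monomial]
    simp only [forall_sub_single_ne_zero_iff (P := (· ≤ l)) le_rfl]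
    rcases eq_or_ne (β l) 0 with hl | hl
    · have hiff : (∀ i, β i ≠ 0 → i ≤ l) ↔ ∀ i, β i ≠ 0 → i < l :=
        forall_congr' fun i => imp_congr_right fun hi =>
          ⟨fun h => lt_of_le_of_ne h (by rintro rfl; exact hi hl), le_of_lt⟩
      simp only [hl, Nat.cast_zero, mul_zero, zero_div, map_zero, ite_self]
      by_cases h : ∀ i, β i ≠ 0 → i < l
      · rw [if_pos (hiff.2 h), if_pos h, sub_self]
      · rw [if_neg (mt hiff.1 h), if_neg h, sub_self]
    · have : ¬ ∀ i, β i ≠ 0 → i < l := fun h => lt_irrefl l (h l hl)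
      rw [if_neg this, sub_zero]
      have hexp : β - Finsupp.single l 1 + Finsupp.single l 1 = β :=
        tsub_add_cancel_of_le (Finsupp.single_le_iff.2 (Nat.one_le_iff_ne_zero.2 hl))
      split_ifs
      · rw [hexp]
        congr 1
        simp [Nat.cast_sub (Nat.one_le_iff_ne_zero.2 hl)]
        field_simp
      · rfl
  | add Λ₁ Λ₂ h₁ h₂ => rw [map_add, integ_add, h₁, h₂, map_add, map_add]; abel

theorem pderiv_sum_smul_integ (c : Fin n → ℂ) (k : Fin n) (P : MvPolynomial (Fin n) ℂ) :
    pderiv k (∑ l, c l • integ l P)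
      = c k • restrictVars (· ≤ k) P + ∑ l ∈ Finset.Ioi k, c l • integ l (pderiv k P) := by
  simp only [map_sum, Derivation.map_smul]
  rw [← Finset.add_sum_erase _ _ (Finset.mem_univ k), pderiv_integ_self]
  congr 1
  have hsub : Finset.Ioi k ⊆ Finset.univ.erase k := fun l hl =>
    Finset.mem_erase.2 ⟨(Finset.mem_Ioi.1 hl).ne', Finset.mem_univ l⟩
  have hlt : ∀ l ∈ Finset.univ.erase k, l ∉ Finset.Ioi k → c l • pderiv k (integ l P) = 0 :=
    fun l hl hlk => by
      rw [pderiv_integ_of_lt (lt_of_le_of_ne (not_lt.1 (hlk ∘ Finset.mem_Ioi.2))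
        (Finset.ne_of_mem_erase hl)), smul_zero]
  rw [← Finset.sum_subset hsub hlt]
  exact Finset.sum_congr rfl fun l hl => by rw [pderiv_integ_of_gt (Finset.mem_Ioi.1 hl)]

theorem pderiv_sum_sum_smul_integ {r : ℕ} (Λ : Fin r → MvPolynomial (Fin n) ℂ)
    (ν : Fin r → Fin n → ℂ)
    (hcomm : ∀ k l : Fin n, k < l →
      ∑ j, (ν j k • pderiv l (Λ j) - ν j l • pderiv k (Λ j)) = 0) (k : Fin n) :
    pderiv k (∑ j, ∑ l, ν j l • integ l (Λ j)) = ∑ j, ν j k • Λ j := by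
  have hswap : ∀ l ∈ Finset.Ioi k, ∑ j, ν j l • integ l (pderiv k (Λ j))
      = ∑ j, ν j k • (restrictVars (· ≤ l) (Λ j) - restrictVars (· < l) (Λ j)) := by
    intro l hl
    have h := hcomm k l (Finset.mem_Ioi.1 hl)
    rw [Finset.sum_sub_distrib, sub_eq_zero] at h
    simp only [← integ_pderiv_self, ← integₗ_apply, ← map_smul, ← map_sum, h]
  calc pderiv k (∑ j, ∑ l, ν j l • integ l (Λ j))
      = ∑ j, (ν j k • restrictVars (· ≤ k) (Λ j)
          + ∑ l ∈ Finset.Ioi k, ν j l • integ l (pderiv k (Λ j))) := by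
        rw [map_sum]; simp only [pderiv_sum_smul_integ]
    _ = ∑ j, ν j k • (restrictVars (· ≤ k) (Λ j) + ∑ l ∈ Finset.Ioi k,
          (restrictVars (· ≤ l) (Λ j) - restrictVars (· < l) (Λ j))) := by
        rw [Finset.sum_add_distrib, Finset.sum_comm, Finset.sum_congr rfl hswap, Finset.sum_comm,
          ← Finset.sum_add_distrib]
        simp only [smul_add, Finset.smul_sum]
    _ = ∑ j, ν j k • Λ j := by simp only [restrictVars_le_add_sum_Ioi]

theorem totalDegree_integ_le (l : Fin n) (Λ : MvPolynomial (Fin n) ℂ) :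
    (integ l Λ).totalDegree ≤ Λ.totalDegree + 1 := by
  rw [integ_eq]
  refine (totalDegree_finsetSum _ _).trans (Finset.sup_le fun β hβ => ?_)
  refine (totalDegree_monomial_le _ _).trans ?_
  rw [Finsupp.sum_add_index' (fun _ => rfl) (fun _ _ _ => rfl), Finsupp.sum_single_index rfl]
  exact Nat.add_le_add_right ((le_totalDegree hβ).trans (totalDegree_restrictVars_le _ _)) 1

theorem totalDegree_sum_sum_smul_integ_le {r d : ℕ} {Λ : Fin r → MvPolynomial (Fin n) ℂ}
    (hΛ : ∀ j, (Λ j).totalDegree ≤ d) (ν : Fin r → Fin n → ℂ) :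
    (∑ j, ∑ l, ν j l • integ l (Λ j)).totalDegree ≤ d + 1 := by
  refine (totalDegree_finsetSum _ _).trans (Finset.sup_le fun j _ => ?_)
  refine (totalDegree_finsetSum _ _).trans (Finset.sup_le fun l _ => ?_)
  exact (totalDegree_smul_le _ _).trans
    ((totalDegree_integ_le _ _).trans (Nat.add_le_add_right (hΛ j) 1))

end Integ

theorem Submodule.map_mem_span_union_singleton {R M ι : Type*} [Semiring R] [AddCommMonoid M]
    [Module R M] (D : ι → M →ₗ[R] M) {s : Set M} {x : M}
    (hs : ∀ y ∈ s, ∀ k, D k y ∈ Submodule.span R s) (hx : ∀ k, D k x ∈ Submodule.span R s) :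
    ∀ y ∈ Submodule.span R (s ∪ {x}), ∀ k, D k y ∈ Submodule.span R (s ∪ {x}) := by
  intro y hy k
  refine (Submodule.span_le (p := (Submodule.span R (s ∪ {x})).comap (D k))).2 ?_ hy
  rintro z (hz | rfl)
  · exact Submodule.span_mono Set.subset_union_left (hs z hz k)
  · exact Submodule.span_mono Set.subset_union_left (hx k)

/-- a new dual element Δ obtained by integration from a derivation-stable
space vanishing on f, satisfying the commutation relations and Δ(f_l) = 0, has degree
≤ t, vanishes on the whole ideal (f), and D + ℂΔ is stable under derivation. -/
theorem statement8 {n N r t : ℕ} (ht : 0 < t) (ξ : Fin n → ℂ)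
    (f : Fin N → MvPolynomial (Fin n) ℂ)
    (Λ : Fin r → MvPolynomial (Fin n) ℂ)
    (hdeg : ∀ j, (Λ j).totalDegree ≤ t - 1)
    (hstab : ∀ Λ' ∈ Submodule.span ℂ (Set.range Λ), ∀ k : Fin n,
        pderiv k Λ' ∈ Submodule.span ℂ (Set.range Λ))
    (hvan : ∀ (j : Fin r) (i : Fin N), dapply ξ (Λ j) (f i) = 0)
    (ν : Fin r → Fin n → ℂ)
    (hcomm : ∀ k l : Fin n, k < l →
      ∑ j, (ν j k • pderiv l (Λ j) - ν j l • pderiv k (Λ j)) = 0)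
    (Δ : MvPolynomial (Fin n) ℂ)
    (hΔ : Δ = ∑ j, ∑ k, ν j k • integ k (Λ j))
    (hΔf : ∀ l : Fin N, dapply ξ Δ (f l) = 0) :
    Δ.totalDegree ≤ t ∧
    (∀ p ∈ Ideal.span (Set.range f), dapply ξ Δ p = 0) ∧
    (∀ Λ' ∈ Submodule.span ℂ (Set.range Λ ∪ {Δ}), ∀ k : Fin n,
      pderiv k Λ' ∈ Submodule.span ℂ (Set.range Λ ∪ {Δ})) := by
  have hpderivΔ : ∀ k, pderiv k Δ ∈ Submodule.span ℂ (Set.range Λ) := fun k => by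
    rw [hΔ, pderiv_sum_sum_smul_integ Λ ν hcomm k]
    exact Submodule.sum_mem _ fun j _ =>
      Submodule.smul_mem _ _ (Submodule.subset_span (Set.mem_range_self j))
  have hstabE := Submodule.map_mem_span_union_singleton (fun k => (pderiv k).toLinearMap)
    (fun y hy => hstab y (Submodule.subset_span hy)) hpderivΔ
  have hvanE : ∀ Λ' ∈ Submodule.span ℂ (Set.range Λ ∪ {Δ}), ∀ i, dapply ξ Λ' (f i) = 0 :=
    fun Λ' hΛ' i => dapply_eq_zero_of_mem_span ξ
      (by rintro _ (⟨j, rfl⟩ | rfl); exacts [hvan j i, hΔf i]) hΛ'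
  refine ⟨?_, fun p hp => dapply_eq_zero_of_mem_ideal_span ξ hstabE hvanE hp Δ
    (Submodule.subset_span (Set.mem_union_right _ rfl)), hstabE⟩
  rw [hΔ]
  exact (totalDegree_sum_sum_smul_integ_le hdeg ν).trans (by omega)
end

section
/- Let D ∈ Hilb_μ, i.e., D is a μ-dimensional subspace of ℂ[d]_{μ−1} stable under the derivations ∂_{d_i}, and for t ≥ 0 let D_t denote the subspace of elements of D of degree ≤ t. Then for every t ≥ 0, the annihilator of D_t in ℂ[x₁,…,xₙ] satisfies (D_t)^⊥ = D^⊥ + m^{t+1}, where m = (x₁,…,xₙ). -/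
open MvPolynomial

/-!
With `ξ = 0`, `dapply 0 Λ p = Σ_β β! Λ_β p_β` is a symmetric pairing, nondegenerate on the
finite-dimensional space `V_t` of polynomials of degree `≤ t`; hence double orthogonals of subspaces
of `V_t`, computed inside `V_t`, give back the subspace, and in particular `D^⊥⊥ = D`.
A functional of degree `≤ t` only sees the truncation `p_{≤t}` of `p`, and `p ∈ m^{t+1}` iff
`p_{≤t} = 0`; so `p ∈ D^⊥ + m^{t+1}` iff `p_{≤t}` lies in `E`, the truncations of `D^⊥`.
Inside `V_t` the orthogonal of `E` is `D^⊥⊥ ∩ V_t = D_t`, so `E = D_t^⊥ ∩ V_t ∋ p_{≤t}`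
whenever `p ∈ D_t^⊥`.
-/

section IteratedPDeriv

variable {σ R : Type*} [CommSemiring R]

theorem iterate_pderiv_monomial (i : σ) (k : ℕ) (α : σ →₀ ℕ) (c : R) :
    (fun r => pderiv i r)^[k] (monomial α c) =
      monomial (α - Finsupp.single i k) (c * (α i).descFactorial k) := by
  induction k with
  | zero => simp
  | succ k ih =>
    rw [Function.iterate_succ_apply', ih, pderiv_monomial, tsub_tsub, ← Finsupp.single_add,
      Finsupp.tsub_apply, Finsupp.single_eq_same, Nat.descFactorial_succ]
    push_cast
    ring_nf

theorem list_sum_single_apply_of_notMem (β : σ →₀ ℕ) {L : List σ} {i : σ} (hi : i ∉ L) :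
    (L.map fun j => Finsupp.single j (β j)).sum i = 0 := by
  induction L with
  | nil => simp
  | cons j L ih =>
    rw [List.mem_cons, not_or] at hi
    simp [Ne.symm hi.1, ih hi.2]

theorem foldr_iterate_pderiv_monomial (β α : σ →₀ ℕ) (c : R) {L : List σ} (hL : L.Nodup) :
    L.foldr (fun i q => (fun r => pderiv i r)^[β i] q) (monomial α c) =
      monomial (α - (L.map fun i => Finsupp.single i (β i)).sum)
        (c * (L.map fun i => ((α i).descFactorial (β i) : R)).prod) := by
  induction L with
  | nil => simp
  | cons i L ih =>
    rw [List.nodup_cons] at hL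
    rw [List.foldr_cons, ih hL.2, iterate_pderiv_monomial, Finsupp.tsub_apply,
      list_sum_single_apply_of_notMem β hL.1, tsub_zero, tsub_tsub, List.map_cons,
      List.sum_cons, List.map_cons, List.prod_cons, add_comm]
    congr 1
    ring

end IteratedPDeriv

section TotalDegree

variable {σ R : Type*} [CommSemiring R]

theorem mem_restrictTotalDegree_iff_degree_le {t : ℕ} {p : MvPolynomial σ R} :
    p ∈ restrictTotalDegree σ R t ↔ ∀ β ∈ p.support, β.degree ≤ t := by
  rw [mem_restrictTotalDegree, totalDegree, Finset.sup_le_iff]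
  rfl

theorem monomial_mem_restrictTotalDegree {t : ℕ} {β : σ →₀ ℕ} (hβ : β.degree ≤ t) (c : R) :
    monomial β c ∈ restrictTotalDegree σ R t :=
  mem_restrictTotalDegree_iff_degree_le.2 fun _ hγ => (Finset.mem_singleton.1
    (support_monomial_subset hγ)) ▸ hβ

theorem restrictTotalDegree_mono {s t : ℕ} (hst : s ≤ t) :
    restrictTotalDegree σ R s ≤ restrictTotalDegree σ R t := fun _ hp =>
  (mem_restrictTotalDegree _ _ _).2 (((mem_restrictTotalDegree _ _ _).1 hp).trans hst)

noncomputable def truncTotalDegree (t : ℕ) : MvPolynomial σ R →ₗ[R] MvPolynomial σ R :=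
  ∑ k ∈ Finset.range (t + 1), homogeneousComponent k

theorem coeff_truncTotalDegree (t : ℕ) (β : σ →₀ ℕ) (p : MvPolynomial σ R) :
    coeff β (truncTotalDegree t p) = if β.degree ≤ t then coeff β p else 0 := by
  simp only [truncTotalDegree, LinearMap.sum_apply, coeff_sum,
    coeff_homogeneousComponent, Finset.sum_ite_eq, Finset.mem_range, Nat.lt_succ_iff]

theorem truncTotalDegree_mem_restrictTotalDegree (t : ℕ) (p : MvPolynomial σ R) :
    truncTotalDegree t p ∈ restrictTotalDegree σ R t := by
  refine mem_restrictTotalDegree_iff_degree_le.2 fun β hβ => ?_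
  by_contra h
  rw [mem_support_iff, coeff_truncTotalDegree, if_neg h] at hβ
  exact hβ rfl

theorem truncTotalDegree_eq_zero_iff {t : ℕ} {p : MvPolynomial σ R} :
    truncTotalDegree t p = 0 ↔ p ∈ idealOfVars σ R ^ (t + 1) := by
  simp only [mem_pow_idealOfVars_iff', Nat.lt_succ_iff, MvPolynomial.ext_iff,
    coeff_truncTotalDegree, coeff_zero, ite_eq_right_iff]

end TotalDegree

section Apolarity

variable {n : ℕ}

theorem pdiff_add (β : Fin n →₀ ℕ) (p q : MvPolynomial (Fin n) ℂ) :
    pdiff β (p + q) = pdiff β p + pdiff β q := by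
  unfold pdiff
  induction List.finRange n with
  | nil => rfl
  | cons i L ih => simp only [List.foldr_cons, ih, iterate_map_add]

theorem pdiff_monomial (β α : Fin n →₀ ℕ) (c : ℂ) :
    pdiff β (monomial α c) =
      monomial (α - β) (c * ∏ i, ((α i).descFactorial (β i) : ℂ)) := by
  rw [pdiff, foldr_iterate_pderiv_monomial β α c (List.nodup_finRange n), ← Fin.sum_univ_def,
    ← Fin.prod_univ_def, Finsupp.univ_sum_single]

theorem eval_zero_pdiff_monomial (β α : Fin n →₀ ℕ) (c : ℂ) :
    eval 0 (pdiff β (monomial α c)) = ffact β * coeff β (monomial α c) := by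
  rw [pdiff_monomial, eval_zero, constantCoeff_monomial, coeff_monomial, ffact]
  push_cast
  by_cases hαβ : α = β
  · subst hαβ
    simp [Nat.descFactorial_self, mul_comm]
  by_cases hle : α ≤ β
  · obtain ⟨i, hi⟩ : ∃ i, α i < β i := by
      by_contra! h
      exact hαβ (le_antisymm hle h)
    rw [if_pos (tsub_eq_zero_of_le hle), if_neg hαβ,
      Finset.prod_eq_zero (Finset.mem_univ i) (by simp [Nat.descFactorial_eq_zero_iff_lt.2 hi])]
    simp
  · rw [if_neg (by rwa [tsub_eq_zero_iff_le]), if_neg hαβ, mul_zero]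

theorem eval_zero_pdiff (β : Fin n →₀ ℕ) (p : MvPolynomial (Fin n) ℂ) :
    eval 0 (pdiff β p) = ffact β * coeff β p := by
  induction p using MvPolynomial.induction_on' with
  | monomial α c => exact eval_zero_pdiff_monomial β α c
  | add p q hp hq => rw [pdiff_add, map_add, hp, hq, coeff_add, mul_add]

theorem dapply_zero_eq_sum_of_support_subset {Λ : MvPolynomial (Fin n) ℂ}
    {F : Finset (Fin n →₀ ℕ)} (hF : Λ.support ⊆ F) (p : MvPolynomial (Fin n) ℂ) :
    dapply 0 Λ p = ∑ β ∈ F, coeff β Λ * ffact β * coeff β p := by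
  rw [dapply, Finset.sum_subset hF fun β _ hβ => by rw [notMem_support_iff.1 hβ, zero_mul]]
  exact Finset.sum_congr rfl fun β _ => by rw [eval_zero_pdiff, mul_assoc]

theorem dapply_zero_comm (Λ p : MvPolynomial (Fin n) ℂ) : dapply 0 Λ p = dapply 0 p Λ := by
  rw [dapply_zero_eq_sum_of_support_subset Finset.subset_union_left,
    dapply_zero_eq_sum_of_support_subset (Finset.subset_union_right (s₁ := Λ.support))]
  exact Finset.sum_congr rfl fun β _ => by ring

theorem dapply_zero_add_right (Λ p q : MvPolynomial (Fin n) ℂ) :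
    dapply 0 Λ (p + q) = dapply 0 Λ p + dapply 0 Λ q := by
  simp only [dapply_zero_eq_sum_of_support_subset subset_rfl, coeff_add, mul_add,
    Finset.sum_add_distrib]

theorem dapply_zero_smul_right (c : ℂ) (Λ p : MvPolynomial (Fin n) ℂ) :
    dapply 0 Λ (c • p) = c • dapply 0 Λ p := by
  simp only [dapply_zero_eq_sum_of_support_subset subset_rfl, coeff_smul, smul_eq_mul,
    Finset.mul_sum]
  exact Finset.sum_congr rfl fun β _ => by ring

noncomputable def apolarForm : LinearMap.BilinForm ℂ (MvPolynomial (Fin n) ℂ) :=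
  LinearMap.mk₂ ℂ (dapply 0)
    (fun Λ Λ' p => by rw [dapply_zero_comm, dapply_zero_add_right, dapply_zero_comm p,
      dapply_zero_comm p])
    (fun c Λ p => by rw [dapply_zero_comm, dapply_zero_smul_right, dapply_zero_comm p])
    dapply_zero_add_right dapply_zero_smul_right

theorem apolarForm_apply (Λ p : MvPolynomial (Fin n) ℂ) : apolarForm Λ p = dapply 0 Λ p := rfl

theorem apolarForm_isSymm : (apolarForm (n := n)).IsSymm :=
  ⟨dapply_zero_comm⟩

theorem apolarForm_monomial_right (Λ : MvPolynomial (Fin n) ℂ) (β : Fin n →₀ ℕ) :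
    apolarForm Λ (monomial β 1) = coeff β Λ * ffact β := by
  rw [apolarForm_apply,
    dapply_zero_eq_sum_of_support_subset (Finset.subset_union_left (s₂ := {β})),
    Finset.sum_eq_single_of_mem β (Finset.mem_union_right _ (Finset.mem_singleton_self β))
      fun γ _ hγ => by rw [coeff_monomial, if_neg (Ne.symm hγ), mul_zero],
    coeff_monomial, if_pos rfl, mul_one]

theorem apolarForm_truncTotalDegree_right {t : ℕ} {Λ : MvPolynomial (Fin n) ℂ}
    (hΛ : Λ ∈ restrictTotalDegree (Fin n) ℂ t) (p : MvPolynomial (Fin n) ℂ) :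
    apolarForm Λ (truncTotalDegree t p) = apolarForm Λ p := by
  simp only [apolarForm_apply, dapply_zero_eq_sum_of_support_subset subset_rfl]
  exact Finset.sum_congr rfl fun β hβ => by
    rw [coeff_truncTotalDegree, if_pos (mem_restrictTotalDegree_iff_degree_le.1 hΛ β hβ)]

theorem apolarForm_restrict_nondegenerate (t : ℕ) :
    (apolarForm.restrict (restrictTotalDegree (Fin n) ℂ t)).Nondegenerate := by
  refine ((apolarForm_isSymm.restrict _).isRefl.nondegenerate_iff_separatingLeft).2 fun u hu => ?_
  refine Subtype.ext (MvPolynomial.ext _ _ fun β => ?_)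
  by_cases hβ : β ∈ (u : MvPolynomial (Fin n) ℂ).support
  · have hβt := mem_restrictTotalDegree_iff_degree_le.1 u.2 β hβ
    have h := hu ⟨_, monomial_mem_restrictTotalDegree hβt 1⟩
    rw [LinearMap.BilinForm.restrict_apply, LinearMap.domRestrict_apply,
      apolarForm_monomial_right] at h
    exact (mul_eq_zero.1 h).resolve_right (Nat.cast_ne_zero.2 (Finset.prod_ne_zero_iff.2
      fun i _ => Nat.factorial_ne_zero _))
  · exact notMem_support_iff.1 hβ

theorem mIdeal_zero : mIdeal (0 : Fin n → ℂ) = idealOfVars (Fin n) ℂ := by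
  ext p
  rw [mIdeal, RingHom.mem_ker, eval_zero, ← pow_one (idealOfVars _ _), mem_pow_idealOfVars_iff']
  simp only [Nat.lt_one_iff, Finsupp.degree_eq_zero_iff, forall_eq, constantCoeff_eq]

theorem apolarForm_orthogonal_orthogonal_inf_le {t : ℕ}
    {W : Submodule ℂ (MvPolynomial (Fin n) ℂ)} (hW : W ≤ restrictTotalDegree (Fin n) ℂ t) :
    apolarForm.orthogonal (apolarForm.orthogonal W ⊓ restrictTotalDegree (Fin n) ℂ t) ⊓
      restrictTotalDegree (Fin n) ℂ t ≤ W := by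
  set V := restrictTotalDegree (Fin n) ℂ t
  rintro Λ ⟨hΛ, hΛV⟩
  have hbiorth := LinearMap.BilinForm.orthogonal_orthogonal (apolarForm_restrict_nondegenerate t)
    (apolarForm_isSymm.restrict V).isRefl (W.comap V.subtype)
  suffices (⟨Λ, hΛV⟩ : V) ∈
      (apolarForm.restrict V).orthogonal ((apolarForm.restrict V).orthogonal (W.comap V.subtype)) by
    rw [hbiorth] at this
    exact this
  exact fun v hv => hΛ v ⟨fun w hw => hv ⟨w, hW hw⟩ hw, v.2⟩

theorem apolarForm_orthogonal_orthogonal {m : ℕ} {D : Submodule ℂ (MvPolynomial (Fin n) ℂ)}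
    (hD : D ≤ restrictTotalDegree (Fin n) ℂ m) :
    apolarForm.orthogonal (apolarForm.orthogonal D) = D := by
  refine le_antisymm (fun Λ hΛ => ?_)
    (LinearMap.BilinForm.le_orthogonal_orthogonal apolarForm_isSymm.isRefl)
  exact apolarForm_orthogonal_orthogonal_inf_le
    (hD.trans (restrictTotalDegree_mono (le_max_left m Λ.totalDegree)))
    ⟨LinearMap.BilinForm.orthogonal_le inf_le_left hΛ,
      (mem_restrictTotalDegree _ _ _).2 (le_max_right _ _)⟩

theorem apolarForm_orthogonal_inf_restrictTotalDegree {m : ℕ}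
    {D : Submodule ℂ (MvPolynomial (Fin n) ℂ)} (hD : D ≤ restrictTotalDegree (Fin n) ℂ m)
    (t : ℕ) :
    apolarForm.orthogonal (D ⊓ restrictTotalDegree (Fin n) ℂ t) =
      apolarForm.orthogonal D ⊔ (idealOfVars (Fin n) ℂ ^ (t + 1)).restrictScalars ℂ := by
  refine le_antisymm (fun p hp => ?_) (sup_le (LinearMap.BilinForm.orthogonal_le inf_le_left)
    fun r hr Λ hΛ => ?_)
  · set E := (apolarForm.orthogonal D).map (truncTotalDegree t)
    have hE : E ≤ restrictTotalDegree (Fin n) ℂ t :=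
      Submodule.map_le_iff_le_comap.2 fun q _ => truncTotalDegree_mem_restrictTotalDegree t q
    have hpE : truncTotalDegree t p ∈ E := by
      refine apolarForm_orthogonal_orthogonal_inf_le hE
        ⟨fun r hr => ?_, truncTotalDegree_mem_restrictTotalDegree t p⟩
      have hrD : r ∈ D := by
        rw [← apolarForm_orthogonal_orthogonal hD]
        intro q hq
        rw [apolarForm_isSymm.eq, ← apolarForm_truncTotalDegree_right hr.2, apolarForm_isSymm.eq]
        exact hr.1 _ ⟨q, hq, rfl⟩
      rw [apolarForm_truncTotalDegree_right hr.2]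
      exact hp r ⟨hrD, hr.2⟩
    obtain ⟨q, hq, hqp⟩ := hpE
    have hpq : p - q ∈ idealOfVars (Fin n) ℂ ^ (t + 1) :=
      truncTotalDegree_eq_zero_iff.1 (by rw [map_sub, hqp, sub_self])
    rw [← add_sub_cancel q p]
    exact Submodule.add_mem_sup hq hpq
  · rw [← apolarForm_truncTotalDegree_right hΛ.2, truncTotalDegree_eq_zero_iff.2 hr, map_zero]

end Apolarity

theorem statement12_general {n μ : ℕ} (D : Submodule ℂ (MvPolynomial (Fin n) ℂ))
    (hD : D ≤ restrictTotalDegree (Fin n) ℂ (μ - 1))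
    (Q : Ideal (MvPolynomial (Fin n) ℂ))
    (hQ : (↑Q : Set (MvPolynomial (Fin n) ℂ)) =
      {p | ∀ Λ ∈ D, dapply (0 : Fin n → ℂ) Λ p = 0}) :
    ∀ t : ℕ,
      {p : MvPolynomial (Fin n) ℂ |
          ∀ Λ ∈ D ⊓ restrictTotalDegree (Fin n) ℂ t, dapply (0 : Fin n → ℂ) Λ p = 0} =
        ↑(Q + mIdeal (0 : Fin n → ℂ) ^ (t + 1)) := by
  intro t
  have hQD : Q.restrictScalars ℂ = apolarForm.orthogonal D := SetLike.coe_injective hQ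
  rw [mIdeal_zero, Submodule.add_eq_sup, ← Submodule.coe_restrictScalars ℂ,
    Submodule.restrictScalars_sup, hQD, ← apolarForm_orthogonal_inf_restrictTotalDegree hD t]
  rfl

/-- for D ∈ Hilb_μ and D_t the elements of D of degree ≤ t,
(D_t)^⊥ = D^⊥ + m^{t+1} (with ξ = 0). -/
theorem statement12 {n μ : ℕ} (D : Submodule ℂ (MvPolynomial (Fin n) ℂ))
    (hD : D ≤ restrictTotalDegree (Fin n) ℂ (μ - 1))
    (hdim : Module.finrank ℂ D = μ)
    (hstab : ∀ Λ ∈ D, ∀ i : Fin n, pderiv i Λ ∈ D)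
    (Q : Ideal (MvPolynomial (Fin n) ℂ))
    (hQ : (↑Q : Set (MvPolynomial (Fin n) ℂ)) =
      {p | ∀ Λ ∈ D, dapply (0 : Fin n → ℂ) Λ p = 0}) :
    ∀ t : ℕ,
      {p : MvPolynomial (Fin n) ℂ |
          ∀ Λ ∈ D ⊓ restrictTotalDegree (Fin n) ℂ t, dapply (0 : Fin n → ℂ) Λ p = 0} =
        ↑(Q + mIdeal (0 : Fin n → ℂ) ^ (t + 1)) :=
  statement12_general D hD Q hQ
end
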